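/- Let i ≥ 1 and p, r ∈ ℤ. Then ∂_i(c^r_p) = c^{r+1}_{p-1} if r = i or r = -i, and ∂_i(c^r_p) = 0 otherwise. -/

import Mathlib

/-!
The polynomial ring `R2 = ℚ[c₁, c₂, …, t₁, t₂, …]`: the variable `Sum.inl p` (for `p ≥ 1`)
is `c_p`, and `Sum.inr i` (for `i ≥ 1`) is `t_i`.
-/

noncomputable section
open MvPolynomial Finset
open scoped Classical

abbrev R2 : Type := MvPolynomial (ℕ ⊕ ℕ) ℚ

/-- The variable `t_i`. -/
def Tv (i : ℕ) : R2 := X (Sum.inr i)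

/-- `c_p`, with the conventions `c_0 = 1` and `c_p = 0` for `p < 0`. -/
def Cv (p : ℤ) : R2 := if p < 0 then 0 else if p = 0 then 1 else X (Sum.inl p.toNat)

/-- The complete homogeneous symmetric polynomial `h_j` evaluated on a list. -/
def hfun : List R2 → ℕ → R2
  | [], j => if j = 0 then 1 else 0
  | a :: L, j => ∑ i ∈ Finset.range (j + 1), a ^ i * hfun L (j - i)

/-- The elementary symmetric polynomial `e_j` evaluated on a list. -/
def efun : List R2 → ℕ → R2
  | [], j => if j = 0 then 1 else 0
  | _ :: _, 0 => 1
  | a :: L, j + 1 => efun L (j + 1) + a * efun L j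

/-- The list `(-t_1, …, -t_r)`. -/
def negT (r : ℕ) : List R2 := (List.range r).map fun i => -Tv (i + 1)

/-- `h^r_j(-t)`: complete homogeneous for `r ≥ 0`, elementary `e^{-r}_j(-t)` for `r < 0`. -/
def hmt (r : ℤ) (j : ℕ) : R2 :=
  if 0 ≤ r then hfun (negT r.toNat) j else efun (negT (-r).toNat) j

/-- `c^r_p := Σ_{j=0}^p c_{p-j} h^r_j(-t)`. -/
def cc (r p : ℤ) : R2 := ∑ j ∈ Finset.range (p.toNat + 1), Cv (p - j) * hmt r j

/-- `a^s_p := (1/2)c_p + Σ_{j=1}^p c_{p-j} h^s_j(-t)`. -/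
def aa (s p : ℤ) : R2 :=
  C (1/2 : ℚ) * Cv p + ∑ j ∈ Finset.Icc 1 p.toNat, Cv (p - j) * hmt s j

/-- Images of the variables under the automorphism `s_i`. -/
def sImg : ℕ → ℕ ⊕ ℕ → R2
  | 0, Sum.inr j => if j = 1 then -Tv 2 else if j = 2 then -Tv 1 else Tv j
  | 0, Sum.inl p =>
      if p = 0 then X (Sum.inl 0)
      else Cv p - 2 * (Tv 1 + Tv 2) *
        ∑ j ∈ Finset.range p, (-1 : R2) ^ j *
          (∑ a ∈ Finset.range (j + 1), Tv 1 ^ a * Tv 2 ^ (j - a)) * Cv ((p : ℤ) - 1 - j)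
  | i + 1, Sum.inr j =>
      if j = i + 1 then Tv (i + 2) else if j = i + 2 then Tv (i + 1) else Tv j
  | _ + 1, Sum.inl p => X (Sum.inl p)

/-- The ring automorphism `s_i` of `R2`. -/
def sA (i : ℕ) : R2 →ₐ[ℚ] R2 := aeval (sImg i)

/-- The fraction field of `R2`. -/
abbrev KK : Type := FractionRing R2

/-- The canonical embedding of `R2` into its fraction field. -/
def toK : R2 →+* KK := algebraMap R2 KK

/-- The denominator `t_1 + t_2` (for `i = 0`) resp. `t_{i+1} - t_i` (for `i ≥ 1`). -/
def dden (i : ℕ) : R2 := if i = 0 then Tv 1 + Tv 2 else Tv (i + 1) - Tv i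

/-- The divided difference operator `∂_i`, with values in the fraction field. -/
def dd (i : ℕ) (f : R2) : KK := (toK f - toK (sA i f)) / toK (dden i)

/-!
For `i ≥ 1` the automorphism `s_i` fixes every `c_p` and swaps `t_i, t_{i+1}`, so it acts on
`c^r_p = Σ_j c_{p-j} h^r_j(-t)` through the symmetric functions of `(-t_1, …, -t_{|r|})`.
These are symmetric, hence fixed, unless `|r| = i`; then `s_i` replaces the last entry `-t_i`
by `-t_{i+1}`, and the exchange identities
`h_{j+1}(a, L) - h_{j+1}(b, L) = (a - b) h_j(a, b, L)`,
`e_{j+1}(a, L) - e_{j+1}(b, L) = (a - b) e_j(L)`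
give `∂_i h^r_{j+1}(-t) = h^{r+1}_j(-t)` for `r = ±i`. Summing against `c_{p-1-j}` yields the claim.
-/

lemma hfun_zero (L : List R2) : hfun L 0 = 1 := by
  cases L with
  | nil => simp [hfun]
  | cons a L => simp [hfun, hfun_zero L]

lemma efun_zero (L : List R2) : efun L 0 = 1 := by
  cases L <;> simp [efun]

lemma hfun_cons_succ (a : R2) (L : List R2) (j : ℕ) :
    hfun (a :: L) (j + 1) = a * hfun (a :: L) j + hfun L (j + 1) := by
  simp only [hfun, Finset.sum_range_succ' _ (j + 1), pow_zero, one_mul, Nat.sub_zero,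
    Nat.add_sub_add_right, Finset.mul_sum]
  congr 1
  exact Finset.sum_congr rfl fun _ _ => by ring

lemma efun_cons_succ (a : R2) (L : List R2) (j : ℕ) :
    efun (a :: L) (j + 1) = efun L (j + 1) + a * efun L j := rfl

lemma hfun_cons_succ_sub (a b : R2) (L : List R2) (j : ℕ) :
    hfun (a :: L) (j + 1) - hfun (b :: L) (j + 1) = (a - b) * hfun (a :: b :: L) j := by
  induction j with
  | zero => simp only [hfun_cons_succ, hfun_zero]; ring
  | succ j ih =>
    rw [hfun_cons_succ a L (j + 1), hfun_cons_succ b L (j + 1), hfun_cons_succ a (b :: L) j]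
    linear_combination a * ih

lemma efun_cons_succ_sub (a b : R2) (L : List R2) (j : ℕ) :
    efun (a :: L) (j + 1) - efun (b :: L) (j + 1) = (a - b) * efun L j := by
  simp only [efun_cons_succ]; ring

-- `R2` is a domain, so the swap identity for `a ≠ b` follows from the two differences above.
lemma hfun_swap (a b : R2) (L : List R2) : hfun (a :: b :: L) = hfun (b :: a :: L) := by
  funext j
  rcases eq_or_ne a b with rfl | hab
  · rfl
  refine mul_left_cancel₀ (sub_ne_zero.mpr hab) ?_
  linear_combination -hfun_cons_succ_sub a b L j - hfun_cons_succ_sub b a L j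

lemma efun_swap (a b : R2) (L : List R2) : efun (a :: b :: L) = efun (b :: a :: L) := by
  funext j
  rcases j with _ | _ | j
  · rfl
  · simp only [efun_cons_succ, efun_zero]; ring
  · simp only [efun_cons_succ]; ring

lemma hfun_perm {L₁ L₂ : List R2} (h : L₁.Perm L₂) : hfun L₁ = hfun L₂ := by
  induction h with
  | nil => rfl
  | cons a _ ih => funext j; simp only [hfun, ih]
  | swap a b L => exact hfun_swap b a L
  | trans _ _ ih₁ ih₂ => exact ih₁.trans ih₂

lemma efun_perm {L₁ L₂ : List R2} (h : L₁.Perm L₂) : efun L₁ = efun L₂ := by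
  induction h with
  | nil => rfl
  | cons a _ ih => funext j; cases j <;> simp only [efun, ih]
  | swap a b L => exact efun_swap b a L
  | trans _ _ ih₁ ih₂ => exact ih₁.trans ih₂

section RingHom

variable {F : Type*} [FunLike F R2 R2] [RingHomClass F R2 R2] (f : F)

lemma map_hfun (L : List R2) (j : ℕ) : f (hfun L j) = hfun (L.map f) j := by
  induction L generalizing j with
  | nil => simp only [hfun, List.map_nil]; split_ifs <;> simp
  | cons a L ih => simp only [hfun, List.map_cons, map_sum, map_mul, map_pow, ih]

lemma map_efun (L : List R2) (j : ℕ) : f (efun L j) = efun (L.map f) j := by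
  induction L generalizing j with
  | nil => simp only [efun, List.map_nil]; split_ifs <;> simp
  | cons a L ih => cases j <;> simp only [efun, List.map_cons, map_one, map_add, map_mul, ih]

end RingHom

lemma sA_Tv (k j : ℕ) : sA (k + 1) (Tv j) = Tv (Equiv.swap (k + 1) (k + 2) j) := by
  simp only [sA, Tv, aeval_X, sImg, Equiv.swap_apply_def]
  split_ifs <;> rfl

lemma sA_Tv_of_ne {k j : ℕ} (h₁ : j ≠ k + 1) (h₂ : j ≠ k + 2) : sA (k + 1) (Tv j) = Tv j := by
  rw [sA_Tv, Equiv.swap_apply_of_ne_of_ne h₁ h₂]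

lemma sA_Cv (k : ℕ) (p : ℤ) : sA (k + 1) (Cv p) = Cv p := by
  unfold Cv
  split_ifs
  · exact map_zero _
  · exact map_one _
  · simp only [sA, aeval_X, sImg]

lemma negT_add (a b : ℕ) :
    negT (a + b) = negT a ++ (List.range b).map fun q => -Tv (a + q + 1) := by
  simp only [negT, List.range_add, List.map_append, List.map_map, Function.comp_def]

lemma negT_succ (m : ℕ) : negT (m + 1) = negT m ++ [-Tv (m + 1)] := by
  simp [negT_add]

lemma negT_add_two (k : ℕ) : negT (k + 2) = negT k ++ [-Tv (k + 1), -Tv (k + 2)] := by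
  simp [negT_succ]

lemma negT_add_two_perm (k : ℕ) : (negT (k + 2)).Perm (-Tv (k + 1) :: -Tv (k + 2) :: negT k) := by
  rw [negT_add_two]
  exact List.perm_append_comm

lemma map_sA_negT_of_le {k m : ℕ} (h : m ≤ k) : (negT m).map (sA (k + 1)) = negT m := by
  simp only [negT, List.map_map]
  refine List.map_congr_left fun q hq => ?_
  rw [List.mem_range] at hq
  simp only [Function.comp_apply, map_neg, sA_Tv_of_ne (k := k) (j := q + 1) (by omega) (by omega)]

lemma map_sA_negT_succ (k : ℕ) : (negT (k + 1)).map (sA (k + 1)) = negT k ++ [-Tv (k + 2)] := by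
  simp [negT_succ, map_sA_negT_of_le le_rfl, sA_Tv]

lemma map_sA_negT_perm {k m : ℕ} (hm : m ≠ k + 1) : ((negT m).map (sA (k + 1))).Perm (negT m) := by
  rcases le_or_gt m k with h | h
  · rw [map_sA_negT_of_le h]
  obtain ⟨b, rfl⟩ : ∃ b, m = k + 2 + b := ⟨m - (k + 2), by omega⟩
  have hrest : ((List.range b).map fun q => -Tv (k + 2 + q + 1)).map (sA (k + 1)) =
      (List.range b).map fun q => -Tv (k + 2 + q + 1) := by
    simp only [List.map_map]
    exact List.map_congr_left fun q _ => by
      simp only [Function.comp_apply, map_neg,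
        sA_Tv_of_ne (k := k) (j := k + 2 + q + 1) (by omega) (by omega)]
  rw [negT_add, negT_add_two]
  simp only [List.map_append, map_sA_negT_of_le le_rfl, hrest, List.map_cons, List.map_nil,
    map_neg, sA_Tv, Equiv.swap_apply_left, Equiv.swap_apply_right]
  exact ((List.Perm.swap _ _ _).append_left _).append_right _

lemma hmt_zero (r : ℤ) : hmt r 0 = 1 := by
  unfold hmt
  split_ifs
  · exact hfun_zero _
  · exact efun_zero _

lemma hmt_natCast (m j : ℕ) : hmt m j = hfun (negT m) j := by
  simp [hmt]

lemma hmt_neg_natCast (m j : ℕ) : hmt (-m) j = efun (negT m) j := by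
  rcases m with _ | m
  · cases j <;> rfl
  · simp [hmt]; omega

lemma sA_hmt_of_ne {k : ℕ} {r : ℤ} (h₁ : r ≠ (k + 1 : ℕ)) (h₂ : r ≠ -((k + 1 : ℕ) : ℤ))
    (j : ℕ) : sA (k + 1) (hmt r j) = hmt r j := by
  obtain ⟨m, rfl | rfl⟩ := Int.eq_nat_or_neg r
  · rw [hmt_natCast, map_hfun, hfun_perm (map_sA_negT_perm (by omega))]
  · rw [hmt_neg_natCast, map_efun, efun_perm (map_sA_negT_perm (by omega))]

lemma hmt_succ_sub_sA {k : ℕ} {r : ℤ} (hr : r = (k + 1 : ℕ) ∨ r = -((k + 1 : ℕ) : ℤ)) (j : ℕ) :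
    hmt r (j + 1) - sA (k + 1) (hmt r (j + 1)) = dden (k + 1) * hmt (r + 1) j := by
  have hd : dden (k + 1) = Tv (k + 2) - Tv (k + 1) := if_neg k.succ_ne_zero
  rcases hr with rfl | rfl
  · rw [hmt_natCast, map_hfun, map_sA_negT_succ, negT_succ,
      show ((k + 1 : ℕ) : ℤ) + 1 = (k + 2 : ℕ) by push_cast; ring, hmt_natCast,
      hfun_perm (negT_add_two_perm k), hfun_perm (List.perm_append_singleton _ _),
      hfun_perm (List.perm_append_singleton _ _), hfun_cons_succ_sub, hd]
    ring
  · rw [hmt_neg_natCast, map_efun, map_sA_negT_succ, negT_succ,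
      show -((k + 1 : ℕ) : ℤ) + 1 = -(k : ℕ) by push_cast; ring, hmt_neg_natCast,
      efun_perm (List.perm_append_singleton _ _), efun_perm (List.perm_append_singleton _ _),
      efun_cons_succ_sub, hd]
    ring

lemma Cv_of_neg {p : ℤ} (hp : p < 0) : Cv p = 0 := if_pos hp

lemma cc_eq_sum_range (r p : ℤ) {N : ℕ} (hN : p < N) :
    cc r p = ∑ j ∈ range N, Cv (p - j) * hmt r j := by
  have hvan : ∀ j ≥ (p + 1).toNat, Cv (p - j) * hmt r j = 0 := fun j hj => by
    rw [Cv_of_neg (by omega), zero_mul]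
  rw [cc, eventually_constant_sum hvan (n := p.toNat + 1) (by omega),
    eventually_constant_sum hvan (n := N) (by omega)]

lemma sA_cc_of_ne {k : ℕ} {r : ℤ} (h₁ : r ≠ (k + 1 : ℕ)) (h₂ : r ≠ -((k + 1 : ℕ) : ℤ)) (p : ℤ) :
    sA (k + 1) (cc r p) = cc r p := by
  simp only [cc, map_sum, map_mul, sA_Cv, sA_hmt_of_ne h₁ h₂]

lemma cc_sub_sA_cc {k : ℕ} {r : ℤ} (hr : r = (k + 1 : ℕ) ∨ r = -((k + 1 : ℕ) : ℤ)) (p : ℤ) :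
    cc r p - sA (k + 1) (cc r p) = dden (k + 1) * cc (r + 1) (p - 1) := by
  rw [cc_eq_sum_range (r + 1) (p - 1) (N := p.toNat) (by omega), mul_sum]
  simp only [cc, map_sum, map_mul, sA_Cv, ← sum_sub_distrib, ← mul_sub]
  rw [sum_range_succ', hmt_zero, map_one, sub_self, mul_zero, add_zero]
  refine sum_congr rfl fun j _ => ?_
  rw [hmt_succ_sub_sA hr, show p - (j + 1 : ℕ) = p - 1 - j by push_cast; ring]
  ring

lemma dden_ne_zero (i : ℕ) : dden i ≠ 0 := by
  intro h
  have hcoeff := congrArg (coeff (Finsupp.single (Sum.inr (i + 1)) 1)) h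
  unfold dden at hcoeff
  split_ifs at hcoeff with hi <;> simp [Tv, coeff_X, Finsupp.single_eq_single_iff, hi] at hcoeff

lemma dd_eq_of_sub_eq_mul {i : ℕ} {f g : R2} (h : f - sA i f = dden i * g) : dd i f = toK g := by
  have hden : toK (dden i) ≠ 0 :=
    (map_ne_zero_iff _ (IsFractionRing.injective R2 KK)).mpr (dden_ne_zero i)
  rw [dd, ← map_sub, h, map_mul, mul_div_cancel_left₀ _ hden]

lemma dd_eq_zero_of_sA_eq {i : ℕ} {f : R2} (h : sA i f = f) : dd i f = 0 := by
  rw [dd, h, sub_self, zero_div]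

theorem statement4 (i : ℕ) (hi : 1 ≤ i) (p r : ℤ) :
    ((r = (i : ℤ) ∨ r = -(i : ℤ)) → dd i (cc r p) = toK (cc (r + 1) (p - 1))) ∧
    (r ≠ (i : ℤ) → r ≠ -(i : ℤ) → dd i (cc r p) = 0) := by
  obtain ⟨k, rfl⟩ : ∃ k, i = k + 1 := ⟨i - 1, by omega⟩
  exact ⟨fun hr => dd_eq_of_sub_eq_mul (cc_sub_sA_cc hr p),
    fun h₁ h₂ => dd_eq_zero_of_sA_eq (sA_cc_of_ne h₁ h₂ p)⟩
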